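/- Let X be a set of variables with domain D, let C_L (the learned network), C_T (the target network), and B (the bias) be sets of constraints with scopes contained in X, and assume C_L ⊆ C_T and C_T ⊆ C_L ∪ B (the target network is representable: every target constraint is either already learned or still in the bias). Let Y = ⋃_{c ∈ B} var(c). If there exists no assignment e : X → D that satisfies every constraint in C_L[Y] and violates at least one constraint in B[Y], then sol(C_L) = sol(C_T), i.e., the acquisition system has converged on C_T. -/
import Mathlib

/-- **Correctness of PQ-Gen (Proposition 1).**
Variables form a type `X` with domain `D`; constraints form a type `C` with a scope
function `var : C → Finset X` and a satisfaction predicate `sat : C → (X → D) → Prop`.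
`S[Y] = {c ∈ S | ↑(var c) ⊆ Y}` and `sol(S) = {e | ∀ c ∈ S, sat c e}`.
Assume `C_L ⊆ C_T` and `C_T ⊆ C_L ∪ B`, and let `Y = ⋃_{c ∈ B} var(c)`.
If no assignment satisfies every constraint in `C_L[Y]` while violating at least one
constraint in `B[Y]`, then `sol(C_L) = sol(C_T)`: the system has converged on `C_T`. -/
theorem pqgen_convergence {X D C : Type*}
    (var : C → Finset X) (sat : C → (X → D) → Prop)
    (CL CT B : Set C) (hLT : CL ⊆ CT) (hTB : CT ⊆ CL ∪ B)
    (Y : Set X) (hYdef : Y = ⋃ c ∈ B, ↑(var c))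
    (hno : ¬ ∃ e : X → D,
      (∀ c ∈ {c ∈ CL | ↑(var c) ⊆ Y}, sat c e) ∧
      (∃ c ∈ {c ∈ B | ↑(var c) ⊆ Y}, ¬ sat c e)) :
    {e : X → D | ∀ c ∈ CL, sat c e} = {e : X → D | ∀ c ∈ CT, sat c e} := by
  ext e
  simp only [Set.mem_setOf_eq]
  constructor
  · intro he c hc
    rcases hTB hc with h | h
    · exact he c h
    · by_contra hns
      exact hno ⟨e, fun c' hc' => he c' hc'.1,
        ⟨c, ⟨h, by rw [hYdef]; exact Set.subset_biUnion_of_mem (u := fun c => (↑(var c) : Set X)) h⟩, hns⟩⟩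
  · intro he c hc
    exact he c (hLT hc)
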